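/- Let D_1 be the open unit disc in ℝ². If f ∈ L¹(D_1) and u ∈ C(D_1) is a weak solution of Δu = f on D_1 \ {0}, then u is a weak solution of Δu = f on all of D_1. -/

import Mathlib

open MeasureTheory

noncomputable section

/-- The Laplacian of `f : ℝ^m → ℝ`, as the sum of second partial derivatives. -/
def lap {m : ℕ} (f : EuclideanSpace ℝ (Fin m) → ℝ) (x : EuclideanSpace ℝ (Fin m)) : ℝ :=
  ∑ i, fderiv ℝ (fderiv ℝ f) x (EuclideanSpace.single i 1) (EuclideanSpace.single i 1)

/-- `u` is a weak solution of `Δu = g` on the open set `Ω`: `u, g ∈ L¹_loc(Ω)` and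
`∫_Ω u Δφ = ∫_Ω g φ` for every test function `φ ∈ C_c^∞(Ω)`. -/
def IsWeakSol {m : ℕ} (u g : EuclideanSpace ℝ (Fin m) → ℝ)
    (Ω : Set (EuclideanSpace ℝ (Fin m))) : Prop :=
  LocallyIntegrableOn u Ω ∧ LocallyIntegrableOn g Ω ∧
    ∀ φ : EuclideanSpace ℝ (Fin m) → ℝ,
      ContDiff ℝ (⊤ : ℕ∞) φ → HasCompactSupport φ → tsupport φ ⊆ Ω →
        ∫ x in Ω, u x * lap φ x = ∫ x in Ω, g x * φ x

namespace Stmt16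
open Filter
variable {m : ℕ}
local notation "E" => EuclideanSpace ℝ (Fin m)


lemma fderiv_comp_smul {F : Type*} [NormedAddCommGroup F] [NormedSpace ℝ F]
    (h : E → F) (hh : Differentiable ℝ h) (s : ℝ) (x : E) :
    fderiv ℝ (fun y : E => h (s • y)) x = s • fderiv ℝ h (s • x) := by
  have h2 : fderiv ℝ (fun y : E => h (s • y)) x
      = (fderiv ℝ h (s • x)).comp (fderiv ℝ (fun y : E => s • y) x) :=
    fderiv_comp x (hh.differentiableAt) ((differentiable_id.const_smul s).differentiableAt)
  have h1 : fderiv ℝ (fun y : E => s • y) x = s • ContinuousLinearMap.id ℝ E := by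
    have := fderiv_fun_const_smul (𝕜 := ℝ) (differentiableAt_fun_id (𝕜 := ℝ) (x := x)) s
    simpa [fderiv_id'] using this
  rw [h2, h1]; ext v; simp

lemma contDiff_comp_smul {F : Type*} [NormedAddCommGroup F] [NormedSpace ℝ F]
    {h : E → F} (hh : ContDiff ℝ (⊤:ℕ∞) h) (s : ℝ) :
    ContDiff ℝ (⊤:ℕ∞) (fun y : E => h (s • y)) :=
  hh.comp (contDiff_id.const_smul s)

lemma lap_comp_smul (h : E → ℝ) (hh : ContDiff ℝ (⊤:ℕ∞) h) (s : ℝ) (x : E) :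
    lap (fun y : E => h (s • y)) x = s ^ 2 * lap h (s • x) := by
  have hd : Differentiable ℝ h := hh.differentiable (by simp)
  have hDh : ContDiff ℝ (⊤:ℕ∞) (fderiv ℝ h) := hh.fderiv_right (mod_cast le_top)
  have e1 : fderiv ℝ (fun y : E => h (s • y)) = fun y => s • fderiv ℝ h (s • y) :=
    funext fun y => fderiv_comp_smul h hd s y
  have e2 : fderiv ℝ (fun y : E => fderiv ℝ h (s • y)) x
      = s • fderiv ℝ (fderiv ℝ h) (s • x) :=
    fderiv_comp_smul (fderiv ℝ h) (hDh.differentiable (by simp)) s x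
  have hdiff : DifferentiableAt ℝ (fun y : E => fderiv ℝ h (s • y)) x :=
    ((hDh.differentiable (by simp)).comp
      (differentiable_id.const_smul s)).differentiableAt
  have e3 : fderiv ℝ (fun y : E => s • fderiv ℝ h (s • y)) x
      = s • (s • fderiv ℝ (fderiv ℝ h) (s • x)) := by
    rw [fderiv_fun_const_smul hdiff s, e2]
  unfold lap
  rw [e1, e3, Finset.mul_sum]
  congr 1; funext i
  simp [ContinuousLinearMap.smul_apply]
  ring

lemma fderiv_const_sub' (b : E → ℝ) (hb : Differentiable ℝ b) (k : ℝ) (x : E) :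
    fderiv ℝ (fun y : E => k - b y) x = - fderiv ℝ b x := by
  have : fderiv ℝ (fun y : E => k - b y) x = fderiv ℝ (fun _ : E => k) x - fderiv ℝ b x :=
    fderiv_sub (differentiableAt_const k) (hb.differentiableAt)
  simpa using this

lemma lap_const_sub (b : E → ℝ) (hb : ContDiff ℝ (⊤:ℕ∞) b) (k : ℝ) (x : E) :
    lap (fun y : E => k - b y) x = - lap b x := by
  have hd : Differentiable ℝ b := hb.differentiable (by simp)
  have e1 : fderiv ℝ (fun y : E => k - b y) = fun y => - fderiv ℝ b y :=
    funext fun y => fderiv_const_sub' b hd k y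
  have e2 : fderiv ℝ (fun y : E => - fderiv ℝ b y) x = - fderiv ℝ (fderiv ℝ b) x := by
    have := fderiv_neg (𝕜 := ℝ) (f := fderiv ℝ b) (x := x)
    simpa using this
  unfold lap
  rw [e1, e2]
  simp [Finset.sum_neg_distrib]



lemma fderiv_fderiv_apply (g : E → ℝ) (hg : ContDiff ℝ (⊤:ℕ∞) g) (v x : E) :
    fderiv ℝ (fun y : E => fderiv ℝ g y v) x = (fderiv ℝ (fderiv ℝ g) x).flip v := by
  have hDg : ContDiff ℝ (⊤:ℕ∞) (fderiv ℝ g) := hg.fderiv_right (mod_cast le_top)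
  have hd : DifferentiableAt ℝ (fderiv ℝ g) x :=
    (hDg.differentiable (by simp)).differentiableAt
  have := fderiv_clm_apply (𝕜 := ℝ) (x := x)
    (c := fderiv ℝ g) (u := fun _ : E => v) hd (differentiableAt_const v)
  simpa using this

lemma continuous_lap (g : E → ℝ) (hg : ContDiff ℝ (⊤:ℕ∞) g) : Continuous (lap g) := by
  apply continuous_finset_sum
  intro i _
  have hDg : ContDiff ℝ (⊤:ℕ∞) (fderiv ℝ g) := hg.fderiv_right (mod_cast le_top)
  have hDDg : Continuous (fderiv ℝ (fderiv ℝ g)) := hDg.continuous_fderiv (by simp)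
  exact (hDDg.clm_apply continuous_const).clm_apply continuous_const

lemma support_lap_subset (g : E → ℝ) : Function.support (lap g) ⊆ tsupport g := by
  intro x hx
  have h1 : fderiv ℝ (fderiv ℝ g) x ≠ 0 := by
    intro h0
    apply hx
    unfold lap
    simp [h0]
  have : x ∈ Function.support (fderiv ℝ (fderiv ℝ g)) := h1
  exact (tsupport_fderiv_subset ℝ) ((support_fderiv_subset ℝ) this)

lemma lap_mul (f g : E → ℝ) (hf : ContDiff ℝ (⊤:ℕ∞) f) (hg : ContDiff ℝ (⊤:ℕ∞) g) (x : E) :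
    lap (fun y => f y * g y) x = f x * lap g x
      + 2 * ∑ i, fderiv ℝ f x (EuclideanSpace.single i 1) * fderiv ℝ g x (EuclideanSpace.single i 1)
      + g x * lap f x := by
  have hfd : Differentiable ℝ f := hf.differentiable (by simp)
  have hgd : Differentiable ℝ g := hg.differentiable (by simp)
  have hDf : ContDiff ℝ (⊤:ℕ∞) (fderiv ℝ f) := hf.fderiv_right (mod_cast le_top)
  have hDg : ContDiff ℝ (⊤:ℕ∞) (fderiv ℝ g) := hg.fderiv_right (mod_cast le_top)
  have e1 : fderiv ℝ (fun y => f y * g y)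
      = fun y => f y • fderiv ℝ g y + g y • fderiv ℝ f y :=
    funext fun y => fderiv_fun_mul (hfd.differentiableAt) (hgd.differentiableAt)
  have d1 : DifferentiableAt ℝ (fun y : E => f y • fderiv ℝ g y) x :=
    (hfd.differentiableAt).smul ((hDg.differentiable (by simp)).differentiableAt)
  have d2 : DifferentiableAt ℝ (fun y : E => g y • fderiv ℝ f y) x :=
    (hgd.differentiableAt).smul ((hDf.differentiable (by simp)).differentiableAt)
  have e2 : fderiv ℝ (fun y : E => f y • fderiv ℝ g y + g y • fderiv ℝ f y) x
      = fderiv ℝ (fun y : E => f y • fderiv ℝ g y) x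
        + fderiv ℝ (fun y : E => g y • fderiv ℝ f y) x := fderiv_add d1 d2
  have e3 : fderiv ℝ (fun y : E => f y • fderiv ℝ g y) x
      = f x • fderiv ℝ (fderiv ℝ g) x + (fderiv ℝ f x).smulRight (fderiv ℝ g x) :=
    fderiv_fun_smul (hfd.differentiableAt) ((hDg.differentiable (by simp)).differentiableAt)
  have e4 : fderiv ℝ (fun y : E => g y • fderiv ℝ f y) x
      = g x • fderiv ℝ (fderiv ℝ f) x + (fderiv ℝ g x).smulRight (fderiv ℝ f x) :=
    fderiv_fun_smul (hgd.differentiableAt) ((hDf.differentiable (by simp)).differentiableAt)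
  unfold lap
  rw [e1, e2, e3, e4]
  simp only [ContinuousLinearMap.add_apply, ContinuousLinearMap.smul_apply,
    ContinuousLinearMap.smulRight_apply, smul_eq_mul]
  have hswap : ∑ i, fderiv ℝ g x (EuclideanSpace.single i 1) * fderiv ℝ f x (EuclideanSpace.single i 1)
      = ∑ i, fderiv ℝ f x (EuclideanSpace.single i 1) * fderiv ℝ g x (EuclideanSpace.single i 1) :=
    Finset.sum_congr rfl fun i _ => mul_comm _ _
  rw [Finset.sum_add_distrib, Finset.sum_add_distrib, Finset.sum_add_distrib, hswap,
    two_mul, Finset.mul_sum, Finset.mul_sum]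
  ring

lemma integral_lap_eq_zero (g : E → ℝ) (hg : ContDiff ℝ (⊤:ℕ∞) g)
    (hcs : HasCompactSupport (fderiv ℝ g)) :
    ∫ x, lap g x = 0 := by
  have hDg : ContDiff ℝ (⊤:ℕ∞) (fderiv ℝ g) := hg.fderiv_right (mod_cast le_top)
  have key : ∀ v : E, ∫ x, fderiv ℝ (fderiv ℝ g) x v v = 0 := by
    intro v
    have hgicd : ContDiff ℝ (⊤:ℕ∞) (fun x : E => fderiv ℝ g x v) := hDg.clm_apply contDiff_const
    have hgics : HasCompactSupport (fun x : E => fderiv ℝ g x v) :=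
      hcs.comp_left (g := fun L : EuclideanSpace ℝ (Fin m) →L[ℝ] ℝ => L v) rfl
    have hgid : Differentiable ℝ (fun x : E => fderiv ℝ g x v) :=
      hgicd.differentiable (by simp)
    have hDgi : Continuous (fun x : E => fderiv ℝ (fun y : E => fderiv ℝ g y v) x v) := by
      have : Continuous (fderiv ℝ (fun y : E => fderiv ℝ g y v)) :=
        hgicd.continuous_fderiv (by simp)
      exact this.clm_apply continuous_const
    have hDgics : HasCompactSupport (fun x : E => fderiv ℝ (fun y : E => fderiv ℝ g y v) x v) :=
      hgics.fderiv_apply ℝ v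
    have h1 : Integrable (fun x : E => fderiv ℝ (fun y : E => fderiv ℝ g y v) x v) :=
      hDgi.integrable_of_hasCompactSupport hDgics
    have h2 : Integrable (fun x : E => fderiv ℝ g x v) :=
      (hgicd.continuous).integrable_of_hasCompactSupport hgics
    have main := integral_mul_fderiv_eq_neg_fderiv_mul_of_integrable
      (μ := (volume : Measure E)) (f := fun _ : E => (1:ℝ)) (g := fun x : E => fderiv ℝ g x v)
      (v := v) ?_ ?_ ?_ (fun x _ => differentiableAt_const 1) (fun x _ => hgid x)
    · have e : ∀ x : E, fderiv ℝ (fun y : E => fderiv ℝ g y v) x v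
          = fderiv ℝ (fderiv ℝ g) x v v := by
        intro x; rw [fderiv_fderiv_apply g hg v x]; simp
      have : ∫ x, fderiv ℝ (fun y : E => fderiv ℝ g y v) x v = 0 := by
        simpa using main
      rw [← this]
      exact integral_congr_ae (Filter.Eventually.of_forall fun x => (e x).symm)
    · simp only [fderiv_fun_const]
      simpa using (integrable_zero E ℝ (volume : Measure E))
    · simpa using h1
    · simpa using h2
  unfold lap
  rw [integral_finset_sum]
  · exact Finset.sum_eq_zero fun i _ => key _
  · intro i _
    have hc : Continuous (fun x : E => fderiv ℝ (fderiv ℝ g) x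
        (EuclideanSpace.single i 1) (EuclideanSpace.single i 1)) :=
      ((hDg.continuous_fderiv (by simp)).clm_apply continuous_const).clm_apply
        continuous_const
    have hcsup : HasCompactSupport (fun x : E => fderiv ℝ (fderiv ℝ g) x
        (EuclideanSpace.single i 1) (EuclideanSpace.single i 1)) := by
      apply (hcs.fderiv ℝ).comp_left
        (g := fun L : E →L[ℝ] E →L[ℝ] ℝ => L (EuclideanSpace.single i 1) (EuclideanSpace.single i 1))
      rfl
    exact hc.integrable_of_hasCompactSupport hcsup

/-! ### integrability helper -/

lemma integrableOn_of_zero_off_compact {w : E → ℝ} {s K : Set E} (hs : MeasurableSet s)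
    (hK : IsCompact K) (hKs : K ⊆ s) (hw : ContinuousOn w s) (h0 : ∀ x, x ∉ K → w x = 0) :
    IntegrableOn w s (volume : Measure E) := by
  have h1 : IntegrableOn w K (volume : Measure E) := (hw.mono hKs).integrableOn_compact hK
  have h2 : IntegrableOn w (s \ K) (volume : Measure E) := by
    refine (integrableOn_congr_fun (f := fun _ => (0:ℝ)) ?_ (hs.diff hK.measurableSet)).1
      (integrableOn_zero)
    intro x hx
    exact (h0 x hx.2).symm
  exact (h2.union h1).mono_set (fun x hx => by
    by_cases hxK : x ∈ K
    · exact Or.inr hxK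
    · exact Or.inl ⟨hx, hxK⟩)

/-! ### the scaled cutoffs, in dimension 2 -/

end Stmt16

namespace Stmt16
open Filter
local notation "E₂" => EuclideanSpace ℝ (Fin 2)

def cB : ContDiffBump (0 : E₂) := ⟨1, 2, one_pos, one_lt_two⟩

def bb (n : ℕ) : E₂ → ℝ := fun x => cB (((n:ℝ)+1) • x)

def chi (n : ℕ) : E₂ → ℝ := fun x => 1 - bb n x

lemma sn_pos (n : ℕ) : (0:ℝ) < (n:ℝ)+1 := by positivity

lemma cB_contDiff : ContDiff ℝ (⊤:ℕ∞) (fun x : E₂ => cB x) := cB.contDiff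

lemma bb_contDiff (n : ℕ) : ContDiff ℝ (⊤:ℕ∞) (bb n) := by
  unfold bb
  exact contDiff_comp_smul cB_contDiff _

lemma bb_differentiable (n : ℕ) : Differentiable ℝ (bb n) :=
  (bb_contDiff n).differentiable (by simp)

lemma bb_nonneg (n : ℕ) (x : E₂) : 0 ≤ bb n x := cB.nonneg

lemma bb_le_one (n : ℕ) (x : E₂) : bb n x ≤ 1 := cB.le_one

lemma bb_eq_zero (n : ℕ) (x : E₂) (h : 2/((n:ℝ)+1) ≤ ‖x‖) : bb n x = 0 := by
  apply cB.zero_of_le_dist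
  show cB.rOut ≤ dist (((n:ℝ)+1) • x) 0
  have : cB.rOut = 2 := rfl
  rw [this, dist_zero_right, norm_smul, Real.norm_eq_abs,
    abs_of_pos (sn_pos n)]
  calc (2:ℝ) = ((n:ℝ)+1) * (2/((n:ℝ)+1)) := by field_simp
  _ ≤ ((n:ℝ)+1) * ‖x‖ := by
      apply mul_le_mul_of_nonneg_left h (le_of_lt (sn_pos n))

lemma bb_eq_one (n : ℕ) (x : E₂) (h : ‖x‖ ≤ 1/((n:ℝ)+1)) : bb n x = 1 := by
  apply cB.one_of_mem_closedBall
  show ((n:ℝ)+1) • x ∈ Metric.closedBall (0:E₂) cB.rIn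
  have h1 : cB.rIn = 1 := rfl
  rw [h1, Metric.mem_closedBall, dist_zero_right, norm_smul, Real.norm_eq_abs,
    abs_of_pos (sn_pos n)]
  calc ((n:ℝ)+1) * ‖x‖ ≤ ((n:ℝ)+1) * (1/((n:ℝ)+1)) :=
        mul_le_mul_of_nonneg_left h (le_of_lt (sn_pos n))
  _ = 1 := by field_simp

lemma tsupport_bb (n : ℕ) : tsupport (bb n) ⊆ Metric.closedBall (0:E₂) (2/((n:ℝ)+1)) := by
  apply closure_minimal ?_ Metric.isClosed_closedBall
  intro x hx
  by_contra hxc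
  apply hx
  apply bb_eq_zero
  rw [Metric.mem_closedBall, dist_zero_right, not_le] at hxc
  exact le_of_lt hxc

lemma bb_hasCompactSupport (n : ℕ) : HasCompactSupport (bb n) :=
  HasCompactSupport.of_support_subset_isCompact (isCompact_closedBall _ _)
    ((subset_closure).trans (tsupport_bb n))

lemma chi_contDiff (n : ℕ) : ContDiff ℝ (⊤:ℕ∞) (chi n) := contDiff_const.sub (bb_contDiff n)

lemma abs_chi_le_one (n : ℕ) (x : E₂) : |chi n x| ≤ 1 := by
  rw [abs_le]
  constructor
  · have := bb_le_one n x; simp only [chi]; linarith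
  · have := bb_nonneg n x; simp only [chi]; linarith

lemma chi_eq_zero_near_zero (n : ℕ) (x : E₂) (h : ‖x‖ ≤ 1/((n:ℝ)+1)) : chi n x = 0 := by
  simp only [chi, bb_eq_one n x h, sub_self]

lemma fderiv_chi (n : ℕ) (x : E₂) : fderiv ℝ (chi n) x = - fderiv ℝ (bb n) x :=
  fderiv_const_sub' (bb n) (bb_differentiable n) 1 x

lemma fderiv_bb (n : ℕ) (x : E₂) :
    fderiv ℝ (bb n) x = ((n:ℝ)+1) • fderiv ℝ (fun y : E₂ => cB y) (((n:ℝ)+1) • x) := by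
  have := fderiv_comp_smul (fun y : E₂ => cB y)
    (cB_contDiff.differentiable (by simp)) (((n:ℝ)+1)) x
  exact this

lemma lap_chi (n : ℕ) (x : E₂) :
    lap (chi n) x = -(((n:ℝ)+1)^2 * lap (fun y : E₂ => cB y) (((n:ℝ)+1) • x)) := by
  have h1 : lap (chi n) x = - lap (bb n) x := lap_const_sub (bb n) (bb_contDiff n) 1 x
  have h2 : lap (bb n) x = ((n:ℝ)+1)^2 * lap (fun y : E₂ => cB y) (((n:ℝ)+1) • x) :=
    lap_comp_smul (fun y : E₂ => cB y) cB_contDiff (((n:ℝ)+1)) x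
  rw [h1, h2]

lemma support_lap_chi (n : ℕ) :
    Function.support (lap (chi n)) ⊆ Metric.closedBall (0:E₂) (2/((n:ℝ)+1)) := by
  intro x hx
  have h1 : lap (fun y : E₂ => cB y) (((n:ℝ)+1) • x) ≠ 0 := by
    intro h0
    apply hx
    rw [lap_chi, h0, mul_zero, neg_zero]
  have h2 : (((n:ℝ)+1) • x) ∈ tsupport (fun y : E₂ => cB y) :=
    support_lap_subset _ h1
  have h3 : tsupport (fun y : E₂ => cB y) = Metric.closedBall (0:E₂) cB.rOut :=
    cB.tsupport_eq
  have h4 : ‖((n:ℝ)+1) • x‖ ≤ 2 := by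
    have := h3 ▸ h2
    rw [Metric.mem_closedBall, dist_zero_right] at this
    exact this
  rw [norm_smul, Real.norm_eq_abs, abs_of_pos (sn_pos n)] at h4
  rw [Metric.mem_closedBall, dist_zero_right, le_div_iff₀ (sn_pos n), mul_comm]
  exact h4

lemma hasCompactSupport_fderiv_chi (n : ℕ) : HasCompactSupport (fderiv ℝ (chi n)) := by
  have : fderiv ℝ (chi n) = fun x => - fderiv ℝ (bb n) x := funext (fderiv_chi n)
  rw [this]
  have h := (bb_hasCompactSupport n).fderiv ℝ
  exact h.mono' (by
    intro x hx
    simp only [Function.mem_support, ne_eq, neg_eq_zero] at hx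
    exact subset_closure hx)

lemma integral_lap_chi (n : ℕ) : ∫ x : E₂, lap (chi n) x = 0 :=
  integral_lap_eq_zero (chi n) (chi_contDiff n) (hasCompactSupport_fderiv_chi n)

lemma continuous_fderiv_chi_apply (n : ℕ) (v : E₂) :
    Continuous (fun x : E₂ => fderiv ℝ (chi n) x v) :=
  ((chi_contDiff n).continuous_fderiv (by simp)).clm_apply continuous_const

lemma hasCompactSupport_fderiv_chi_apply (n : ℕ) (v : E₂) :
    HasCompactSupport (fun x : E₂ => fderiv ℝ (chi n) x v) :=
  (hasCompactSupport_fderiv_chi n).comp_left (g := fun L : E₂ →L[ℝ] ℝ => L v) rfl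

lemma integrable_abs_fderiv_chi_apply (n : ℕ) (v : E₂) :
    Integrable (fun x : E₂ => |fderiv ℝ (chi n) x v|) := by
  apply Continuous.integrable_of_hasCompactSupport
  · exact (continuous_fderiv_chi_apply n v).abs
  · exact (hasCompactSupport_fderiv_chi_apply n v).comp_left (g := fun t : ℝ => |t|) abs_zero

lemma integral_abs_fderiv_chi (n : ℕ) (v : E₂) :
    ∫ x : E₂, |fderiv ℝ (chi n) x v|
      = (∫ y : E₂, |fderiv ℝ (fun z : E₂ => cB z) y v|) / ((n:ℝ)+1) := by
  have hpt : ∀ x : E₂, |fderiv ℝ (chi n) x v|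
      = ((n:ℝ)+1) * |fderiv ℝ (fun z : E₂ => cB z) (((n:ℝ)+1) • x) v| := by
    intro x
    rw [fderiv_chi, fderiv_bb]
    simp only [ContinuousLinearMap.neg_apply, ContinuousLinearMap.smul_apply, smul_eq_mul,
      abs_neg, abs_mul]
    rw [abs_of_pos (sn_pos n)]
  rw [integral_congr_ae (Filter.Eventually.of_forall hpt), MeasureTheory.integral_const_mul]
  rw [MeasureTheory.Measure.integral_comp_smul (volume : Measure E₂)
    (fun y : E₂ => |fderiv ℝ (fun z : E₂ => cB z) y v|) (((n:ℝ)+1))]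
  rw [finrank_euclideanSpace_fin, smul_eq_mul]
  rw [abs_of_pos (by positivity : (0:ℝ) < ((((n:ℝ)+1)^2)⁻¹))]
  have hn := sn_pos n
  field_simp

lemma continuous_lap_chi (n : ℕ) : Continuous (lap (chi n)) := continuous_lap _ (chi_contDiff n)

lemma hasCompactSupport_lap_chi (n : ℕ) : HasCompactSupport (lap (chi n)) :=
  HasCompactSupport.of_support_subset_isCompact (isCompact_closedBall _ _) (support_lap_chi n)

lemma integrable_lap_chi (n : ℕ) : Integrable (lap (chi n)) :=
  (continuous_lap_chi n).integrable_of_hasCompactSupport (hasCompactSupport_lap_chi n)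

lemma integrable_abs_lap_chi (n : ℕ) : Integrable (fun x : E₂ => |lap (chi n) x|) :=
  (integrable_lap_chi n).abs

lemma integral_abs_lap_chi (n : ℕ) :
    ∫ x : E₂, |lap (chi n) x| = ∫ y : E₂, |lap (fun z : E₂ => cB z) y| := by
  have hpt : ∀ x : E₂, |lap (chi n) x|
      = (((n:ℝ)+1)^2) * |lap (fun z : E₂ => cB z) (((n:ℝ)+1) • x)| := by
    intro x
    rw [lap_chi, abs_neg, abs_mul]
    rw [abs_of_pos (by positivity : (0:ℝ) < ((n:ℝ)+1)^2)]
  rw [integral_congr_ae (Filter.Eventually.of_forall hpt), MeasureTheory.integral_const_mul]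
  rw [MeasureTheory.Measure.integral_comp_smul (volume : Measure E₂)
    (fun y : E₂ => |lap (fun z : E₂ => cB z) y|) (((n:ℝ)+1))]
  rw [finrank_euclideanSpace_fin, smul_eq_mul]
  rw [abs_of_pos (by positivity : (0:ℝ) < ((((n:ℝ)+1)^2)⁻¹))]
  have hn := sn_pos n
  field_simp

lemma eventually_chi_eq_one (x : E₂) (hx : x ≠ 0) : ∀ᶠ n in atTop, chi n x = 1 := by
  have hxn : 0 < ‖x‖ := norm_pos_iff.2 hx
  obtain ⟨N, hN⟩ := exists_nat_gt (2/‖x‖)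
  filter_upwards [eventually_ge_atTop N] with n hn
  have h2 : (2/‖x‖ : ℝ) ≤ (n:ℝ)+1 := by
    have : (N:ℝ) ≤ (n:ℝ) := by exact_mod_cast hn
    linarith
  have hle : 2/((n:ℝ)+1) ≤ ‖x‖ := by
    rw [div_le_iff₀ (sn_pos n)]
    rw [div_le_iff₀ hxn] at h2
    linarith
  simp [chi, bb_eq_zero n x hle]


end Stmt16

open Stmt16 in
/-- Harvey–Polking: if `f ∈ L¹(D₁)` and `u ∈ C(D₁)` is a weak solution
of `Δu = f` on `D₁ \ {0}`, then `u` is a weak solution of `Δu = f` on all of `D₁`. -/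
theorem stmt16 (f u : EuclideanSpace ℝ (Fin 2) → ℝ)
    (hf : IntegrableOn f (Metric.ball (0 : EuclideanSpace ℝ (Fin 2)) 1))
    (hu : ContinuousOn u (Metric.ball (0 : EuclideanSpace ℝ (Fin 2)) 1))
    (hweak : IsWeakSol u f (Metric.ball (0 : EuclideanSpace ℝ (Fin 2)) 1 \ {0})) :
    IsWeakSol u f (Metric.ball (0 : EuclideanSpace ℝ (Fin 2)) 1) := by
  classical
  have hBmeas : MeasurableSet (Metric.ball (0 : EuclideanSpace ℝ (Fin 2)) 1) :=
    Metric.isOpen_ball.measurableSet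
  refine ⟨hu.locallyIntegrableOn hBmeas, hf.locallyIntegrableOn, ?_⟩
  intro φ hφ hφc hφs
  set B1 : Set (EuclideanSpace ℝ (Fin 2)) := Metric.ball 0 1 with hB1def
  -- basic facts about φ
  have hKc : IsCompact (tsupport φ) := hφc
  have hKB : tsupport φ ⊆ B1 := hφs
  have hφcont : Continuous φ := hφ.continuous
  have hDφcont : Continuous (fderiv ℝ φ) := hφ.continuous_fderiv (by simp)
  have hlapφcont : Continuous (lap φ) := continuous_lap φ hφ
  have hlapφ0 : ∀ x, x ∉ tsupport φ → lap φ x = 0 := by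
    intro x hx; by_contra h; exact hx (support_lap_subset φ h)
  have hDφ0 : ∀ x, x ∉ tsupport φ → fderiv ℝ φ x = 0 := by
    intro x hx; by_contra h; exact hx (support_fderiv_subset ℝ h)
  -- bounds
  obtain ⟨Mu, hMu⟩ := hKc.exists_bound_of_continuousOn (hu.mono hKB)
  obtain ⟨Mφ, hMφ⟩ := (hφc.fderiv ℝ).exists_bound_of_continuous hDφcont
  obtain ⟨Cφ, hCφ⟩ := hφc.exists_bound_of_continuous hφcont
  -- the test functions ψ n = chi n * φ
  have hψcd : ∀ n : ℕ, ContDiff ℝ (⊤:ℕ∞) (fun x => chi n x * φ x) :=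
    fun n => (chi_contDiff n).mul hφ
  have hψcs : ∀ n : ℕ, HasCompactSupport (fun x => chi n x * φ x) := fun n => hφc.mul_left
  have hψsupp : ∀ n : ℕ, tsupport (fun x => chi n x * φ x) ⊆ B1 \ {0} := by
    intro n x hx
    have h1 : (0:EuclideanSpace ℝ (Fin 2)) ∉ tsupport (fun x => chi n x * φ x) := by
      rw [notMem_tsupport_iff_eventuallyEq]
      have hball : Metric.ball (0:EuclideanSpace ℝ (Fin 2)) (1/((n:ℝ)+1)) ∈
          nhds (0:EuclideanSpace ℝ (Fin 2)) := Metric.ball_mem_nhds _ (by positivity)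
      filter_upwards [hball] with y hy
      rw [Metric.mem_ball, dist_zero_right] at hy
      show chi n y * φ y = 0
      rw [chi_eq_zero_near_zero n y (le_of_lt hy), zero_mul]
    refine ⟨hKB (tsupport_mul_subset_right hx), ?_⟩
    intro h0
    rw [Set.mem_singleton_iff] at h0
    rw [h0] at hx
    exact h1 hx
  -- domain congruence
  have hae : (B1 \ {0} : Set (EuclideanSpace ℝ (Fin 2))) =ᵐ[volume] B1 :=
    diff_ae_eq_self.2 (measure_mono_null Set.inter_subset_right (measure_singleton 0))
  have key : ∀ n : ℕ, ∫ x in B1, u x * lap (fun y => chi n y * φ y) x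
      = ∫ x in B1, f x * (chi n x * φ x) := by
    intro n
    have h := hweak.2.2 (fun x => chi n x * φ x) (hψcd n) (hψcs n) (hψsupp n)
    calc ∫ x in B1, u x * lap (fun y => chi n y * φ y) x
        = ∫ x in B1 \ {0}, u x * lap (fun y => chi n y * φ y) x :=
          (setIntegral_congr_set hae).symm
      _ = ∫ x in B1 \ {0}, f x * (chi n x * φ x) := h
      _ = ∫ x in B1, f x * (chi n x * φ x) := setIntegral_congr_set hae
  -- a.e. every point of B1 is nonzero
  have h0ae : ∀ᵐ x ∂(volume.restrict B1), x ≠ (0:EuclideanSpace ℝ (Fin 2)) := by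
    rw [MeasureTheory.ae_iff]
    have hset : {x : EuclideanSpace ℝ (Fin 2) | ¬ x ≠ 0} = {(0:EuclideanSpace ℝ (Fin 2))} := by
      ext y; simp
    rw [hset, Measure.restrict_apply (measurableSet_singleton _)]
    exact measure_mono_null Set.inter_subset_left (measure_singleton 0)
  -- RHS limit
  have hT1 : Filter.Tendsto (fun n : ℕ => ∫ x in B1, f x * (chi n x * φ x)) Filter.atTop
      (nhds (∫ x in B1, f x * φ x)) := by
    apply tendsto_integral_of_dominated_convergence (fun x => |f x| * Cφ)
    · intro n
      exact (hf.1).mul (((chi_contDiff n).continuous.mul hφcont).aestronglyMeasurable)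
    · exact (hf.norm.mul_const Cφ)
    · intro n
      refine Filter.Eventually.of_forall fun x => ?_
      have h1 : |chi n x * φ x| ≤ Cφ := by
        rw [abs_mul]
        have h2 := abs_chi_le_one n x
        have h3 : |φ x| ≤ Cφ := by
          have := hCφ x; rwa [Real.norm_eq_abs] at this
        have h4 : (0:ℝ) ≤ |φ x| := abs_nonneg _
        nlinarith
      rw [Real.norm_eq_abs, abs_mul]
      exact mul_le_mul_of_nonneg_left h1 (abs_nonneg _)
    · filter_upwards [h0ae] with x hx
      refine Filter.Tendsto.congr' ?_ tendsto_const_nhds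
      filter_upwards [eventually_chi_eq_one x hx] with n hn
      rw [hn, one_mul]
  -- integrability of the pieces
  have hInt1 : IntegrableOn (fun x => u x * lap φ x) B1 :=
    integrableOn_of_zero_off_compact hBmeas hKc hKB (hu.mul hlapφcont.continuousOn)
      (fun x hx => by rw [hlapφ0 x hx, mul_zero])
  have hIntA : ∀ n : ℕ, IntegrableOn (fun x => u x * (chi n x * lap φ x)) B1 := by
    intro n
    refine integrableOn_of_zero_off_compact hBmeas hKc hKB
      (hu.mul (((chi_contDiff n).continuous.mul hlapφcont).continuousOn)) ?_
    intro x hx; rw [hlapφ0 x hx, mul_zero, mul_zero]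
  have hIntB : ∀ n : ℕ, IntegrableOn (fun x => u x * (2 * ∑ i, fderiv ℝ (chi n) x
      (EuclideanSpace.single i 1) * fderiv ℝ φ x (EuclideanSpace.single i 1))) B1 := by
    intro n
    refine integrableOn_of_zero_off_compact hBmeas hKc hKB
      (hu.mul (continuousOn_const.mul (continuousOn_finset_sum _ fun i _ =>
        ((continuous_fderiv_chi_apply n _).continuousOn.mul
          ((hDφcont.clm_apply continuous_const).continuousOn))))) ?_
    intro x hx
    rw [hDφ0 x hx]
    simp
  have hIntC : ∀ n : ℕ, IntegrableOn (fun x => (u x * φ x) * lap (chi n) x) B1 := by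
    intro n
    refine integrableOn_of_zero_off_compact hBmeas hKc hKB
      ((hu.mul hφcont.continuousOn).mul (continuous_lap_chi n).continuousOn) ?_
    intro x hx
    rw [image_eq_zero_of_notMem_tsupport hx, mul_zero, zero_mul]
  -- decomposition of the integral
  have hsplit : ∀ n : ℕ, ∫ x in B1, u x * lap (fun y => chi n y * φ y) x
      = (∫ x in B1, u x * (chi n x * lap φ x))
        + (∫ x in B1, u x * (2 * ∑ i, fderiv ℝ (chi n) x
            (EuclideanSpace.single i 1) * fderiv ℝ φ x (EuclideanSpace.single i 1)))
        + (∫ x in B1, (u x * φ x) * lap (chi n) x) := by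
    intro n
    have hAB : IntegrableOn (fun x => u x * (chi n x * lap φ x)
        + u x * (2 * ∑ i, fderiv ℝ (chi n) x (EuclideanSpace.single i 1)
          * fderiv ℝ φ x (EuclideanSpace.single i 1))) B1 := (hIntA n).add (hIntB n)
    calc ∫ x in B1, u x * lap (fun y => chi n y * φ y) x
        = ∫ x in B1, (u x * (chi n x * lap φ x)
            + u x * (2 * ∑ i, fderiv ℝ (chi n) x (EuclideanSpace.single i 1)
              * fderiv ℝ φ x (EuclideanSpace.single i 1))
            + (u x * φ x) * lap (chi n) x) := by
          apply integral_congr_ae (Filter.Eventually.of_forall fun x => ?_)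
          rw [lap_mul (chi n) φ (chi_contDiff n) hφ x]
          ring
      _ = _ := by rw [integral_add hAB (hIntC n), integral_add (hIntA n) (hIntB n)]
  -- limit of term A
  have hTA : Filter.Tendsto (fun n : ℕ => ∫ x in B1, u x * (chi n x * lap φ x)) Filter.atTop
      (nhds (∫ x in B1, u x * lap φ x)) := by
    apply tendsto_integral_of_dominated_convergence (fun x => |u x * lap φ x|)
    · intro n
      exact ((hu.mul (((chi_contDiff n).continuous.mul hlapφcont).continuousOn)).aestronglyMeasurable hBmeas)
    · exact hInt1.abs
    · intro n
      refine Filter.Eventually.of_forall fun x => ?_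
      rw [Real.norm_eq_abs]
      calc |u x * (chi n x * lap φ x)| = |chi n x| * |u x * lap φ x| := by
            rw [abs_mul, abs_mul, abs_mul]; ring
        _ ≤ 1 * |u x * lap φ x| :=
            mul_le_mul_of_nonneg_right (abs_chi_le_one n x) (abs_nonneg _)
        _ = |u x * lap φ x| := one_mul _
    · filter_upwards [h0ae] with x hx
      refine Filter.Tendsto.congr' ?_ tendsto_const_nhds
      filter_upwards [eventually_chi_eq_one x hx] with n hn
      rw [hn, one_mul]
  -- limit of term B
  have hTB : Filter.Tendsto (fun n : ℕ => ∫ x in B1, u x * (2 * ∑ i, fderiv ℝ (chi n) x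
      (EuclideanSpace.single i 1) * fderiv ℝ φ x (EuclideanSpace.single i 1))) Filter.atTop
      (nhds 0) := by
    set CM : ℝ := 2 * (max Mu 0) * (max Mφ 0) with hCMdef
    have hCM0 : 0 ≤ CM := by positivity
    set CB : ℝ := CM * ∑ i : Fin 2, ∫ y : EuclideanSpace ℝ (Fin 2),
      |fderiv ℝ (fun z : EuclideanSpace ℝ (Fin 2) => cB z) y (EuclideanSpace.single i 1)|
      with hCBdef
    apply squeeze_zero_norm (a := fun n : ℕ => CB * (1/((n:ℝ)+1)))
    · intro n
      have hGint : Integrable (fun x : EuclideanSpace ℝ (Fin 2) =>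
          CM * ∑ i : Fin 2, |fderiv ℝ (chi n) x (EuclideanSpace.single i 1)|) :=
        (integrable_finset_sum _ fun i _ => integrable_abs_fderiv_chi_apply n _).const_mul CM
      have hpt : ∀ x ∈ B1, ‖u x * (2 * ∑ i, fderiv ℝ (chi n) x
          (EuclideanSpace.single i 1) * fderiv ℝ φ x (EuclideanSpace.single i 1))‖
          ≤ CM * ∑ i : Fin 2, |fderiv ℝ (chi n) x (EuclideanSpace.single i 1)| := by
        intro x _
        have hsumnn : (0:ℝ) ≤ ∑ i : Fin 2, |fderiv ℝ (chi n) x (EuclideanSpace.single i 1)| :=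
          Finset.sum_nonneg fun i _ => abs_nonneg _
        by_cases hxK : x ∈ tsupport φ
        · have h1 : |u x| ≤ max Mu 0 := by
            have := hMu x hxK; rw [Real.norm_eq_abs] at this
            exact le_trans this (le_max_left _ _)
          have h2 : ∀ i : Fin 2, |fderiv ℝ φ x (EuclideanSpace.single i 1)| ≤ max Mφ 0 := by
            intro i
            have ha := (fderiv ℝ φ x).le_opNorm (EuclideanSpace.single i 1)
            rw [EuclideanSpace.norm_single, norm_one, mul_one] at ha
            rw [← Real.norm_eq_abs]
            exact le_trans ha (le_trans (hMφ x) (le_max_left _ _))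
          have hS : |∑ i, fderiv ℝ (chi n) x (EuclideanSpace.single i 1)
              * fderiv ℝ φ x (EuclideanSpace.single i 1)|
              ≤ (∑ i : Fin 2, |fderiv ℝ (chi n) x (EuclideanSpace.single i 1)|) * (max Mφ 0) := by
            calc |∑ i, fderiv ℝ (chi n) x (EuclideanSpace.single i 1)
                * fderiv ℝ φ x (EuclideanSpace.single i 1)|
                ≤ ∑ i : Fin 2, |fderiv ℝ (chi n) x (EuclideanSpace.single i 1)
                  * fderiv ℝ φ x (EuclideanSpace.single i 1)| :=
                  Finset.abs_sum_le_sum_abs _ _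
              _ ≤ ∑ i : Fin 2, |fderiv ℝ (chi n) x (EuclideanSpace.single i 1)| * (max Mφ 0) :=
                  Finset.sum_le_sum fun i _ => by
                    rw [abs_mul]
                    exact mul_le_mul_of_nonneg_left (h2 i) (abs_nonneg _)
              _ = (∑ i : Fin 2, |fderiv ℝ (chi n) x (EuclideanSpace.single i 1)|) * (max Mφ 0) :=
                  (Finset.sum_mul _ _ _).symm
          rw [Real.norm_eq_abs, abs_mul, abs_mul, abs_two]
          have hMu0 : (0:ℝ) ≤ max Mu 0 := le_max_right _ _
          have hMφ0 : (0:ℝ) ≤ max Mφ 0 := le_max_right _ _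
          have habs0 : (0:ℝ) ≤ |u x| := abs_nonneg _
          have habsS : (0:ℝ) ≤ |∑ i, fderiv ℝ (chi n) x (EuclideanSpace.single i 1)
              * fderiv ℝ φ x (EuclideanSpace.single i 1)| := abs_nonneg _
          rw [hCMdef]
          nlinarith
        · rw [hDφ0 x hxK]
          simp only [ContinuousLinearMap.zero_apply, mul_zero, Finset.sum_const_zero,
            mul_zero, norm_zero]
          positivity
      calc ‖∫ x in B1, u x * (2 * ∑ i, fderiv ℝ (chi n) x
          (EuclideanSpace.single i 1) * fderiv ℝ φ x (EuclideanSpace.single i 1))‖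
          ≤ ∫ x in B1, ‖u x * (2 * ∑ i, fderiv ℝ (chi n) x
            (EuclideanSpace.single i 1) * fderiv ℝ φ x (EuclideanSpace.single i 1))‖ :=
            norm_integral_le_integral_norm _
        _ ≤ ∫ x in B1, CM * ∑ i : Fin 2, |fderiv ℝ (chi n) x (EuclideanSpace.single i 1)| :=
            setIntegral_mono_on (hIntB n).norm hGint.integrableOn hBmeas hpt
        _ ≤ ∫ x : EuclideanSpace ℝ (Fin 2),
            CM * ∑ i : Fin 2, |fderiv ℝ (chi n) x (EuclideanSpace.single i 1)| :=
            setIntegral_le_integral hGint (Filter.Eventually.of_forall fun x => by positivity)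
        _ = CM * ∑ i : Fin 2, ∫ x : EuclideanSpace ℝ (Fin 2),
            |fderiv ℝ (chi n) x (EuclideanSpace.single i 1)| := by
            rw [MeasureTheory.integral_const_mul,
              integral_finset_sum _ fun i _ => integrable_abs_fderiv_chi_apply n _]
        _ = CM * ∑ i : Fin 2, (∫ y : EuclideanSpace ℝ (Fin 2),
            |fderiv ℝ (fun z : EuclideanSpace ℝ (Fin 2) => cB z) y
              (EuclideanSpace.single i 1)|) / ((n:ℝ)+1) := by
            rw [Finset.sum_congr rfl fun i _ => integral_abs_fderiv_chi n _]
        _ = CB * (1/((n:ℝ)+1)) := by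
            rw [hCBdef, ← Finset.sum_div]
            ring
    · have := tendsto_one_div_add_atTop_nhds_zero_nat.const_mul CB
      simpa using this
  -- limit of term C
  have hTC : Filter.Tendsto (fun n : ℕ => ∫ x in B1, (u x * φ x) * lap (chi n) x) Filter.atTop
      (nhds 0) := by
    rw [NormedAddCommGroup.tendsto_nhds_zero]
    intro ε hε
    set L : ℝ := ∫ y : EuclideanSpace ℝ (Fin 2), |lap (fun z : EuclideanSpace ℝ (Fin 2) => cB z) y|
      with hLdef
    have hL0 : 0 ≤ L := integral_nonneg fun y => abs_nonneg _
    have hcont0 : ContinuousAt (fun x => u x * φ x) 0 := by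
      have h1 : ContinuousAt u 0 :=
        hu.continuousAt (Metric.isOpen_ball.mem_nhds (Metric.mem_ball_self one_pos))
      exact h1.mul hφcont.continuousAt
    have hεL : 0 < ε / (2*(L+1)) := by positivity
    have hev : ∀ᶠ y in nhds (0:EuclideanSpace ℝ (Fin 2)),
        |u y * φ y - u 0 * φ 0| ≤ ε/(2*(L+1)) := by
      have := Metric.tendsto_nhds.mp hcont0 (ε/(2*(L+1))) hεL
      filter_upwards [this] with y hy
      rw [Real.dist_eq] at hy
      exact le_of_lt hy
    obtain ⟨r, hr0, hrball⟩ := Metric.eventually_nhds_iff_ball.mp hev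
    obtain ⟨N, hN⟩ := exists_nat_gt (max (2/r) 2)
    filter_upwards [Filter.eventually_ge_atTop N] with n hn
    have hnN : (max (2/r) 2 : ℝ) < (n:ℝ)+1 := by
      have : (N:ℝ) ≤ (n:ℝ) := by exact_mod_cast hn
      linarith
    have hrn : 2/((n:ℝ)+1) < r := by
      rw [div_lt_iff₀ (sn_pos n)]
      have h2 : 2/r < (n:ℝ)+1 := lt_of_le_of_lt (le_max_left _ _) hnN
      rw [div_lt_iff₀ hr0] at h2
      linarith [mul_comm r ((n:ℝ)+1)]
    have h1n : 2/((n:ℝ)+1) < 1 := by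
      rw [div_lt_one (sn_pos n)]
      exact lt_of_le_of_lt (le_max_right _ _) hnN
    have hKn : Metric.closedBall (0:EuclideanSpace ℝ (Fin 2)) (2/((n:ℝ)+1)) ⊆ B1 := by
      intro y hy
      rw [Metric.mem_closedBall, dist_zero_right] at hy
      rw [hB1def, Metric.mem_ball, dist_zero_right]
      linarith
    have hlapchi0 : ∀ x, x ∉ Metric.closedBall (0:EuclideanSpace ℝ (Fin 2)) (2/((n:ℝ)+1)) →
        lap (chi n) x = 0 := by
      intro x hx; by_contra h; exact hx (support_lap_chi n h)
    have hIc1 : IntegrableOn (fun x => (u x * φ x - u 0 * φ 0) * lap (chi n) x) B1 :=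
      integrableOn_of_zero_off_compact hBmeas (isCompact_closedBall _ _) hKn
        (((hu.mul hφcont.continuousOn).sub continuousOn_const).mul
          (continuous_lap_chi n).continuousOn)
        (fun x hx => by rw [hlapchi0 x hx, mul_zero])
    have hIc2 : IntegrableOn (fun x => (u 0 * φ 0) * lap (chi n) x) B1 :=
      ((integrable_lap_chi n).const_mul _).integrableOn
    have hCeq : ∫ x in B1, (u x * φ x) * lap (chi n) x
        = (∫ x in B1, (u x * φ x - u 0 * φ 0) * lap (chi n) x)
          + (u 0 * φ 0) * ∫ x in B1, lap (chi n) x := by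
      rw [← MeasureTheory.integral_const_mul, ← integral_add hIc1 hIc2]
      apply integral_congr_ae (Filter.Eventually.of_forall fun x => by ring)
    have hzero : ∫ x in B1, lap (chi n) x = 0 := by
      rw [setIntegral_eq_integral_of_forall_compl_eq_zero
        (fun x hx => hlapchi0 x (fun hc => hx (hKn hc)))]
      exact integral_lap_chi n
    rw [hCeq, hzero, mul_zero, add_zero]
    calc ‖∫ x in B1, (u x * φ x - u 0 * φ 0) * lap (chi n) x‖
        ≤ ∫ x in B1, ‖(u x * φ x - u 0 * φ 0) * lap (chi n) x‖ :=
          norm_integral_le_integral_norm _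
      _ ≤ ∫ x in B1, (ε/(2*(L+1))) * |lap (chi n) x| := by
          apply setIntegral_mono_on hIc1.norm
            (((integrable_abs_lap_chi n).const_mul _).integrableOn) hBmeas
          intro x _
          rw [Real.norm_eq_abs, abs_mul]
          by_cases hx : lap (chi n) x = 0
          · simp [hx]
          · have hxK := support_lap_chi n hx
            rw [Metric.mem_closedBall, dist_zero_right] at hxK
            have hxr : x ∈ Metric.ball (0:EuclideanSpace ℝ (Fin 2)) r := by
              rw [Metric.mem_ball, dist_zero_right]
              linarith
            exact mul_le_mul_of_nonneg_right (hrball x hxr) (abs_nonneg _)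
      _ ≤ ∫ x : EuclideanSpace ℝ (Fin 2), (ε/(2*(L+1))) * |lap (chi n) x| :=
          setIntegral_le_integral ((integrable_abs_lap_chi n).const_mul _)
            (Filter.Eventually.of_forall fun x => by positivity)
      _ = (ε/(2*(L+1))) * L := by
          rw [MeasureTheory.integral_const_mul, integral_abs_lap_chi n]
      _ < ε := by
          rw [div_mul_eq_mul_div, div_lt_iff₀ (by positivity : (0:ℝ) < 2*(L+1))]
          nlinarith
  -- conclude
  have hT2 : Filter.Tendsto (fun n : ℕ => ∫ x in B1, u x * lap (fun y => chi n y * φ y) x)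
      Filter.atTop (nhds (∫ x in B1, u x * lap φ x)) := by
    have h := (hTA.add hTB).add hTC
    rw [add_zero, add_zero] at h
    exact h.congr (fun n => (hsplit n).symm)
  exact tendsto_nhds_unique (hT2.congr (fun n => key n)) hT1
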